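/- arXiv:1202.3972 — 3 statements merged into one kernel-verified Lean document; each statement's English description precedes it below -/
import Mathlib

section
/- In the semidihedral group SD_{8n}, for every integer r, the conjugacy class of a^r is exactly {a^r, a^{(2n-1)r}}. -/
/-!
Conjugation by `b` sends `a` to `a ^ (2n-1)`, and `(2n-1)^2 ≡ 1 (mod 4n)`, so conjugation by either
generator maps the pair `{a, a ^ (2n-1)}` onto itself. Hence every conjugate of `a` lies in that
pair, and raising to the `r`-th power gives the conjugacy class of `a ^ r`.
-/

namespace Subgroup

variable {G : Type*} [Group G] {a b : G} {k : ℤ}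

theorem conj_mem_pair_of_mem_closure (hb : b * a * b⁻¹ = a ^ k) (hk : a ^ (k * k) = a)
    {g : G} (hg : g ∈ closure ({a, b} : Set G)) :
    g * a * g⁻¹ = a ∨ g * a * g⁻¹ = a ^ k := by
  have conj_pow_k : ∀ x : G, x * a ^ k * x⁻¹ = (x * a * x⁻¹) ^ k := fun x => conj_zpow.symm
  induction hg using closure_induction with
  | mem x hx =>
    rcases hx with rfl | rfl
    · left; group
    · exact .inr hb
  | one => left; group
  | mul x y _ _ hx hy =>
    have hxy : x * y * a * (x * y)⁻¹ = x * (y * a * y⁻¹) * x⁻¹ := by group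
    rw [hxy]
    rcases hy with hy | hy <;> rw [hy]
    · exact hx
    · rw [conj_pow_k]
      rcases hx with hx | hx <;> rw [hx]
      · exact .inr rfl
      · left; rw [← zpow_mul, hk]
  | inv x _ hx =>
    rcases hx with hx | hx
    · left; nth_rw 1 [← hx]; group
    · right
      have hxk : x * a ^ k * x⁻¹ = a := by rw [conj_pow_k, hx, ← zpow_mul, hk]
      nth_rw 1 [← hxk]; group

theorem setOf_conj_zpow_eq_pair (hgen : closure ({a, b} : Set G) = ⊤)
    (hb : b * a * b⁻¹ = a ^ k) (hk : a ^ (k * k) = a) (r : ℤ) :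
    {x : G | ∃ g : G, x = g * a ^ r * g⁻¹} = ({a ^ r, a ^ (k * r)} : Set G) := by
  ext x
  constructor
  · rintro ⟨g, rfl⟩
    have hg : g ∈ closure ({a, b} : Set G) := hgen ▸ mem_top g
    rw [← conj_zpow, zpow_mul]
    rcases conj_mem_pair_of_mem_closure hb hk hg with h | h <;> rw [h]
    · exact .inl rfl
    · exact .inr rfl
  · rintro (rfl | rfl)
    · exact ⟨1, by group⟩
    · exact ⟨b, by rw [← conj_zpow, hb, zpow_mul]⟩

end Subgroup

/-- In the semidihedral group `SD_{8n}`, for every integer `r`, the conjugacy class of `a^r`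
is exactly `{a^r, a^{(2n-1)r}}`. -/
theorem sd8n_conjClass_apow {G : Type*} [Group G] (n : ℕ) (hn : 2 ≤ n) (a b : G)
    (ha : a ^ (4 * n) = 1) (hb : b ^ 2 = 1) (hrel : b * a * b = a ^ (2 * n - 1))
    (hgen : Subgroup.closure ({a, b} : Set G) = ⊤) :
    ∀ r : ℤ, {x : G | ∃ g : G, x = g * a ^ r * g⁻¹} =
      ({a ^ r, a ^ ((2 * (n : ℤ) - 1) * r)} : Set G) := by
  have hb_inv : b⁻¹ = b := inv_eq_of_mul_eq_one_right (by rw [← sq, hb])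
  have hconj : b * a * b⁻¹ = a ^ (2 * (n : ℤ) - 1) := by
    rw [hb_inv, hrel, ← zpow_natCast]
    congr 1
    omega
  have hsq : a ^ ((2 * (n : ℤ) - 1) * (2 * (n : ℤ) - 1)) = a := by
    have hexp : (2 * (n : ℤ) - 1) * (2 * (n : ℤ) - 1) = ((4 * n : ℕ) : ℤ) * (n - 1) + 1 := by
      push_cast; ring
    rw [hexp, zpow_add_one, zpow_mul, zpow_natCast, ha, one_zpow, one_mul]
  exact Subgroup.setOf_conj_zpow_eq_pair hgen hconj hsq
end

section
/- Let n ≥ 2 and let r be odd. The permutation σ of Z/4nZ defined by σ(t) = (2n-1)t + r satisfies σ⁴ = id and has no fixed points and no 2-cycles; hence its disjoint cycle decomposition consists of exactly n cycles, each of length 4. -/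
/-!
Since `(2n - 1)² ≡ 1` and `2n · r ≡ 2n (mod 4n)` for odd `r`, the square `σ²` is the translation
`t ↦ t + 2n`: it has order two and no fixed points. A permutation whose `p^(k+1)`-th power is
trivial while its `p^k`-th power is fixed-point-free has all its cycles of length exactly
`p^(k+1)`, because every cycle length divides `p^(k+1)`.
-/

namespace Equiv.Perm

variable {α : Type*} {σ : Perm α}

theorem pow_apply_eq_self_of_dvd {x : α} {d e : ℕ} (hde : d ∣ e) (hx : (σ ^ d) x = x) :
    (σ ^ e) x = x := by
  obtain ⟨c, rfl⟩ := hde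
  rw [pow_mul]
  exact pow_apply_eq_self_of_apply_eq_self hx c

variable [Fintype α] [DecidableEq α]

theorem exists_pow_apply_eq_self_of_mem_cycleType {m : ℕ} (hm : m ∈ σ.cycleType) :
    ∃ x, σ x ≠ x ∧ (σ ^ m) x = x := by
  rw [cycleType_def, Multiset.mem_map] at hm
  obtain ⟨c, hc, rfl⟩ := hm
  have hc : c ∈ σ.cycleFactorsFinset := hc
  have hcycle := (mem_cycleFactorsFinset_iff.mp hc).1
  obtain ⟨x, hx⟩ := hcycle.nonempty_support
  refine ⟨x, mem_support.mp (mem_cycleFactorsFinset_support_le hc hx), ?_⟩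
  rw [← cycleOf_pow_apply_self, ← cycle_is_cycleOf hx hc, Function.comp_apply,
    ← hcycle.orderOf, pow_orderOf_eq_one, one_apply]

theorem cycleType_eq_replicate_of_pow_prime_pow_eq_one {p k : ℕ} (hp : p.Prime)
    (h : σ ^ p ^ (k + 1) = 1) (hfree : ∀ x, (σ ^ p ^ k) x ≠ x) :
    σ.cycleType = Multiset.replicate (Fintype.card α / p ^ (k + 1)) (p ^ (k + 1)) := by
  have hmem : ∀ m ∈ σ.cycleType, m = p ^ (k + 1) := by
    intro m hm
    obtain ⟨j, hj, rfl⟩ := (Nat.dvd_prime_pow hp).1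
      ((dvd_of_mem_cycleType hm).trans (orderOf_dvd_of_pow_eq_one h))
    rcases hj.eq_or_lt with rfl | hjk
    · rfl
    obtain ⟨x, -, hx⟩ := exists_pow_apply_eq_self_of_mem_cycleType hm
    exact (hfree x (pow_apply_eq_self_of_dvd (pow_dvd_pow p (Nat.lt_succ_iff.mp hjk)) hx)).elim
  have hsupport : σ.support = Finset.univ := by
    refine Finset.eq_univ_of_forall fun x ↦ mem_support.mpr fun hx ↦ hfree x ?_
    exact pow_apply_eq_self_of_apply_eq_self hx _
  have hsum : Multiset.card σ.cycleType * p ^ (k + 1) = Fintype.card α := by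
    rw [← Finset.card_univ, ← hsupport, ← sum_cycleType, Multiset.eq_replicate_card.mpr hmem,
      Multiset.sum_replicate, smul_eq_mul, Multiset.card_replicate]
  rw [Multiset.eq_replicate_card.mpr hmem, ← hsum,
    Nat.mul_div_cancel _ (pow_pos hp.pos _)]

end Equiv.Perm

namespace ZMod

theorem natCast_two_mul_sub_one (n : ℕ) [NeZero n] :
    ((2 * n - 1 : ℕ) : ZMod (4 * n)) = 2 * n - 1 := by
  rw [Nat.cast_sub (by have := NeZero.pos n; omega)]
  push_cast
  ring

theorem four_mul_self (n : ℕ) : (4 * n : ZMod (4 * n)) = 0 := by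
  exact_mod_cast natCast_self (4 * n)

theorem two_mul_sub_one_sq (n : ℕ) : (2 * n - 1 : ZMod (4 * n)) ^ 2 = 1 := by
  linear_combination ((n : ZMod (4 * n)) - 1) * four_mul_self n

theorem two_mul_mul_of_odd (n : ℕ) {r : ℤ} (hr : Odd r) :
    (2 * n : ZMod (4 * n)) * r = 2 * n := by
  obtain ⟨k, rfl⟩ := hr
  push_cast
  linear_combination (k : ZMod (4 * n)) * four_mul_self n

theorem two_mul_ne_zero (n : ℕ) [NeZero n] : (2 * n : ZMod (4 * n)) ≠ 0 := by
  intro h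
  have hdvd : 4 * n ∣ 2 * n := (natCast_eq_zero_iff _ _).mp (by exact_mod_cast h)
  have hn := NeZero.pos n
  have := Nat.le_of_dvd (by omega) hdvd
  omega

end ZMod

open Equiv.Perm in
theorem cycles_of_odd_r_general (n : ℕ) [NeZero n] (r : ℤ) (hrodd : Odd r)
    (σ : Equiv.Perm (ZMod (4 * n)))
    (hσ : ∀ t : ZMod (4 * n), σ t = ((2 * n - 1 : ℕ) : ZMod (4 * n)) * t + (r : ZMod (4 * n))) :
    σ ^ 4 = 1 ∧ (∀ t : ZMod (4 * n), σ t ≠ t) ∧ (∀ t : ZMod (4 * n), σ (σ t) ≠ t) ∧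
      σ.cycleType = Multiset.replicate n 4 := by
  have hσ2 : ∀ t, (σ ^ 2) t = t + 2 * n := fun t ↦ by
    rw [sq, mul_apply, hσ, hσ, ZMod.natCast_two_mul_sub_one]
    linear_combination t * ZMod.two_mul_sub_one_sq n + ZMod.two_mul_mul_of_odd n hrodd
  have hσ4 : σ ^ 4 = 1 := by
    ext t
    rw [show σ ^ 4 = σ ^ 2 * σ ^ 2 by rw [← pow_add], mul_apply, hσ2, hσ2, one_apply]
    linear_combination ZMod.four_mul_self n
  have hfree : ∀ t, (σ ^ 2) t ≠ t := fun t h ↦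
    ZMod.two_mul_ne_zero n (by linear_combination (hσ2 t).symm.trans h)
  refine ⟨hσ4, fun t h ↦ hfree t (pow_apply_eq_self_of_apply_eq_self h 2), hfree, ?_⟩
  rw [cycleType_eq_replicate_of_pow_prime_pow_eq_one (k := 1) Nat.prime_two hσ4 hfree,
    ZMod.card]
  simp

/-- For `n ≥ 2` and odd `r`, the permutation `σ` of `ℤ/4nℤ` with `σ(t) = (2n-1)t + r`
satisfies `σ⁴ = id`, has no fixed points and no 2-cycles, and its disjoint cycle
decomposition consists of exactly `n` cycles, each of length 4. -/
theorem cycles_of_odd_r (n : ℕ) [NeZero n] (hn : 2 ≤ n) (r : ℤ) (hrodd : Odd r)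
    (σ : Equiv.Perm (ZMod (4 * n)))
    (hσ : ∀ t : ZMod (4 * n), σ t = ((2 * n - 1 : ℕ) : ZMod (4 * n)) * t + (r : ZMod (4 * n))) :
    σ ^ 4 = 1 ∧ (∀ t : ZMod (4 * n), σ t ≠ t) ∧ (∀ t : ZMod (4 * n), σ (σ t) ≠ t) ∧
      σ.cycleType = Multiset.replicate n 4 :=
  cycles_of_odd_r_general n r hrodd σ hσ
end

section
/- Let n ≥ 1 and let h be an integer with 1 ≤ h < 2n. There exist integers t₁, t₂ with 0 ≤ t₁, t₂ < 4n such that cos((t₁ - t₂)·h·π / (2n)) = 0 if and only if ν₂(h) < ν₂(2n), where ν₂ denotes the 2-adic valuation. -/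
/-!
`cos (x π / (2n))` vanishes exactly when `x` is an odd multiple of `n`, so the question is whether
`d h = m n` with `m` odd for some `d = t₁ - t₂`. Comparing 2-adic valuations of both sides forces
`ν₂(h) ≤ ν₂(n)`; conversely, if `ν₂(h) ≤ ν₂(n)` then `d = n / 2^{ν₂(h)}` works.
-/

open Real

theorem Real.cos_mul_pi_div_two_mul_eq_zero_iff {c : ℝ} (hc : c ≠ 0) (x : ℝ) :
    cos (x * π / (2 * c)) = 0 ↔ ∃ k : ℤ, x = (2 * k + 1) * c := by
  rw [cos_eq_zero_iff]
  refine exists_congr fun k => ?_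
  rw [div_eq_iff (by positivity), eq_comm]
  constructor <;> intro e
  · apply mul_right_cancel₀ pi_ne_zero
    linear_combination -e
  · linear_combination -π * e

theorem padicValInt_le_of_mul_eq_mul {p : ℕ} [Fact p.Prime] {d h m n : ℤ}
    (hm : ¬ (p : ℤ) ∣ m) (hn : n ≠ 0) (e : d * h = m * n) :
    padicValInt p h ≤ padicValInt p n := by
  have hm0 : m ≠ 0 := by rintro rfl; exact hm (dvd_zero _)
  have hdh : d * h ≠ 0 := e ▸ mul_ne_zero hm0 hn
  have hval := congrArg (padicValInt p) e
  rw [padicValInt.mul (left_ne_zero_of_mul hdh) (right_ne_zero_of_mul hdh),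
    padicValInt.mul hm0 hn, padicValInt.eq_zero_of_not_dvd hm] at hval
  omega

theorem exists_mul_eq_mul_of_padicValNat_le {p : ℕ} [hp : Fact p.Prime] {h n : ℕ} (hh : h ≠ 0)
    (hle : padicValNat p h ≤ padicValNat p n) :
    ∃ t m : ℕ, t ≤ n ∧ ¬ p ∣ m ∧ t * h = m * n := by
  have hah : p ^ padicValNat p h ∣ h := pow_padicValNat_dvd
  have hmax : ¬ p ^ (padicValNat p h + 1) ∣ h := pow_succ_padicValNat_not_dvd hh
  have han : p ^ padicValNat p h ∣ n := (pow_dvd_pow p hle).trans pow_padicValNat_dvd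
  generalize padicValNat p h = a at hah hmax han
  obtain ⟨m, rfl⟩ := hah
  obtain ⟨t, rfl⟩ := han
  have hpa : 0 < p ^ a := pow_pos hp.out.pos a
  refine ⟨t, m, Nat.le_mul_of_pos_left t hpa,
    fun ⟨c, hc⟩ => hmax ⟨c, by rw [hc, pow_succ, mul_assoc]⟩, by ring⟩

theorem exists_cos_eq_zero_iff_general (n h : ℕ) (hn : 1 ≤ n) (h1 : 1 ≤ h) :
    (∃ t₁ t₂ : ℤ, 0 ≤ t₁ ∧ t₁ < 4 * n ∧ 0 ≤ t₂ ∧ t₂ < 4 * n ∧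
      Real.cos (((t₁ - t₂ : ℤ) : ℝ) * h * Real.pi / (2 * n)) = 0) ↔
    padicValNat 2 h < padicValNat 2 (2 * n) := by
  have hn0 : (n : ℝ) ≠ 0 := by positivity
  rw [padicValNat_base_mul one_lt_two (by omega), Nat.lt_succ_iff]
  constructor
  · rintro ⟨t₁, t₂, -, -, -, -, hcos⟩
    obtain ⟨k, hk⟩ := (cos_mul_pi_div_two_mul_eq_zero_iff hn0 _).1 hcos
    have hk' : (t₁ - t₂) * (h : ℤ) = (2 * k + 1) * n := by exact_mod_cast hk
    have hval := padicValInt_le_of_mul_eq_mul (p := 2) (by push_cast; omega) (by omega) hk'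
    simpa only [padicValInt.of_nat, Nat.cast_le] using hval
  · intro hle
    obtain ⟨t, m, htn, hm, e⟩ := exists_mul_eq_mul_of_padicValNat_le (by omega) hle
    refine ⟨t, 0, by positivity, by omega, le_rfl, by omega, ?_⟩
    obtain ⟨k, rfl⟩ : Odd m := Nat.odd_iff.2 (by omega)
    refine (cos_mul_pi_div_two_mul_eq_zero_iff hn0 _).2 ⟨k, ?_⟩
    rw [Int.cast_sub, Int.cast_zero, sub_zero]
    exact_mod_cast e

/-- For `n ≥ 1` and `1 ≤ h < 2n`, there exist `t₁, t₂` with `0 ≤ t₁, t₂ < 4n` and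
`cos((t₁ - t₂)·h·π/(2n)) = 0` if and only if `ν₂(h) < ν₂(2n)`, where `ν₂` is the 2-adic
valuation. -/
theorem exists_cos_eq_zero_iff (n h : ℕ) (hn : 1 ≤ n) (h1 : 1 ≤ h) (h2 : h < 2 * n) :
    (∃ t₁ t₂ : ℤ, 0 ≤ t₁ ∧ t₁ < 4 * n ∧ 0 ≤ t₂ ∧ t₂ < 4 * n ∧
      Real.cos (((t₁ - t₂ : ℤ) : ℝ) * h * Real.pi / (2 * n)) = 0) ↔
    padicValNat 2 h < padicValNat 2 (2 * n) :=
  exists_cos_eq_zero_iff_general n h hn h1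
end
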